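/- arXiv:1502.05200 — 4 statements merged into one kernel-verified Lean document; each statement's English description precedes it below -/
import Mathlib

section
/- Let H be a 4×4 complex skew-Hermitian matrix and let Q = 𝐣⊗𝐣. Then there exists a real number φ₀ such that Hᵀ·Q + Q·H = (i·φ₀)·Q if and only if H lies in the real span 𝔡 = span_ℝ{ i·(𝟙⊗𝟙), 𝐢⊗𝟙, 𝐣⊗𝟙, 𝐤⊗𝟙, 𝟙⊗𝐢, 𝟙⊗𝐣, 𝟙⊗𝐤 }. -/
open Matrix Kronecker Complex

noncomputable section

/-- The 2×2 identity matrix 𝟙. -/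
def m1 : Matrix (Fin 2) (Fin 2) ℂ := 1
/-- The quaternion unit 𝐢 as a 2×2 complex matrix. -/
def mI : Matrix (Fin 2) (Fin 2) ℂ := !![0, Complex.I; Complex.I, 0]
/-- The quaternion unit 𝐣 as a 2×2 complex matrix. -/
def mJ : Matrix (Fin 2) (Fin 2) ℂ := !![0, -1; 1, 0]
/-- The quaternion unit 𝐤 as a 2×2 complex matrix. -/
def mK : Matrix (Fin 2) (Fin 2) ℂ := !![Complex.I, 0; 0, -Complex.I]

/-- K̂ = (i/2)(𝐢⊗𝐢 + 𝐣⊗𝐣 + 𝐤⊗𝐤). -/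
def Khat : Matrix (Fin 2 × Fin 2) (Fin 2 × Fin 2) ℂ :=
  (Complex.I / 2) • (mI ⊗ₖ mI + mJ ⊗ₖ mJ + mK ⊗ₖ mK)

/-- X̂₀ = (1/(γₙ+γₑ))(−γₙ·𝐢⊗𝟙 + γₑ·𝟙⊗𝐢). -/
def Xhat0 (γn γe : ℝ) : Matrix (Fin 2 × Fin 2) (Fin 2 × Fin 2) ℂ :=
  (γn + γe)⁻¹ • ((-γn) • (mI ⊗ₖ m1) + γe • (m1 ⊗ₖ mI))

/-- Ŷ₀ = (1/(γₙ+γₑ))(γₙ·𝐣⊗𝟙 − γₑ·𝟙⊗𝐣). -/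
def Yhat0 (γn γe : ℝ) : Matrix (Fin 2 × Fin 2) (Fin 2 × Fin 2) ℂ :=
  (γn + γe)⁻¹ • (γn • (mJ ⊗ₖ m1) + (-γe) • (m1 ⊗ₖ mJ))

/-- Ẑ₀ = (1/(γₙ+γₑ))(−γₙ·𝐤⊗𝟙 + γₑ·𝟙⊗𝐤). -/
def Zhat0 (γn γe : ℝ) : Matrix (Fin 2 × Fin 2) (Fin 2 × Fin 2) ℂ :=
  (γn + γe)⁻¹ • ((-γn) • (mK ⊗ₖ m1) + γe • (m1 ⊗ₖ mK))

/-- X̂ = X̂₀ + κ·K̂. -/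
def Xhat (γn γe κ : ℝ) : Matrix (Fin 2 × Fin 2) (Fin 2 × Fin 2) ℂ := Xhat0 γn γe + κ • Khat
/-- Ŷ = Ŷ₀ + κ·K̂. -/
def Yhat (γn γe κ : ℝ) : Matrix (Fin 2 × Fin 2) (Fin 2 × Fin 2) ℂ := Yhat0 γn γe + κ • Khat
/-- Ẑ = Ẑ₀ + κ·K̂. -/
def Zhat (γn γe κ : ℝ) : Matrix (Fin 2 × Fin 2) (Fin 2 × Fin 2) ℂ := Zhat0 γn γe + κ • Khat

/-- K̂_X = (i/2)(−𝐣⊗𝐤 + 𝐤⊗𝐣). -/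
def KhatX : Matrix (Fin 2 × Fin 2) (Fin 2 × Fin 2) ℂ :=
  (Complex.I / 2) • (-(mJ ⊗ₖ mK) + mK ⊗ₖ mJ)
/-- K̂_Y = (i/2)(𝐤⊗𝐢 − 𝐢⊗𝐤). -/
def KhatY : Matrix (Fin 2 × Fin 2) (Fin 2 × Fin 2) ℂ :=
  (Complex.I / 2) • (mK ⊗ₖ mI - mI ⊗ₖ mK)
/-- K̂_Z = (i/2)(−𝐢⊗𝐣 + 𝐣⊗𝐢). -/
def KhatZ : Matrix (Fin 2 × Fin 2) (Fin 2 × Fin 2) ℂ :=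
  (Complex.I / 2) • (-(mI ⊗ₖ mJ) + mJ ⊗ₖ mI)
/-- K̂_XX = −(i/2)(𝐣⊗𝐣 + 𝐤⊗𝐤). -/
def KhatXX : Matrix (Fin 2 × Fin 2) (Fin 2 × Fin 2) ℂ :=
  (-(Complex.I / 2)) • (mJ ⊗ₖ mJ + mK ⊗ₖ mK)
/-- K̂_YY = −(i/2)(𝐢⊗𝐢 + 𝐤⊗𝐤). -/
def KhatYY : Matrix (Fin 2 × Fin 2) (Fin 2 × Fin 2) ℂ :=
  (-(Complex.I / 2)) • (mI ⊗ₖ mI + mK ⊗ₖ mK)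
/-- K̂_ZZ = −(i/2)(𝐢⊗𝐢 + 𝐣⊗𝐣). -/
def KhatZZ : Matrix (Fin 2 × Fin 2) (Fin 2 × Fin 2) ℂ :=
  (-(Complex.I / 2)) • (mI ⊗ₖ mI + mJ ⊗ₖ mJ)
/-- L̂_X = −(1/4)(𝐢⊗𝟙 + 𝟙⊗𝐢). -/
def LhatX : Matrix (Fin 2 × Fin 2) (Fin 2 × Fin 2) ℂ :=
  (-(1 / 4 : ℝ)) • (mI ⊗ₖ m1 + m1 ⊗ₖ mI)
/-- L̂_Y = (1/4)(𝐣⊗𝟙 + 𝟙⊗𝐣). -/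
def LhatY : Matrix (Fin 2 × Fin 2) (Fin 2 × Fin 2) ℂ :=
  ((1 / 4 : ℝ)) • (mJ ⊗ₖ m1 + m1 ⊗ₖ mJ)
/-- L̂_Z = −(1/4)(𝐤⊗𝟙 + 𝟙⊗𝐤). -/
def LhatZ : Matrix (Fin 2 × Fin 2) (Fin 2 × Fin 2) ℂ :=
  (-(1 / 4 : ℝ)) • (mK ⊗ₖ m1 + m1 ⊗ₖ mK)
/-- X̂_KK = (1/2)(𝐢⊗𝟙 − 𝟙⊗𝐢). -/
def XhatKK : Matrix (Fin 2 × Fin 2) (Fin 2 × Fin 2) ℂ :=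
  ((1 / 2 : ℝ)) • (mI ⊗ₖ m1 - m1 ⊗ₖ mI)
/-- Ŷ_KK = (1/2)(−𝐣⊗𝟙 + 𝟙⊗𝐣). -/
def YhatKK : Matrix (Fin 2 × Fin 2) (Fin 2 × Fin 2) ℂ :=
  ((1 / 2 : ℝ)) • (-(mJ ⊗ₖ m1) + m1 ⊗ₖ mJ)
/-- Ẑ_KK = (1/2)(𝐤⊗𝟙 − 𝟙⊗𝐤). -/
def ZhatKK : Matrix (Fin 2 × Fin 2) (Fin 2 × Fin 2) ℂ :=
  ((1 / 2 : ℝ)) • (mK ⊗ₖ m1 - m1 ⊗ₖ mK)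
/-- K̂_XY = −(i/(2(γₙ+γₑ)))(γₙ·𝐢⊗𝐣 + γₑ·𝐣⊗𝐢) − (κ/2)(𝐢⊗𝟙 − 𝟙⊗𝐢). -/
def KhatXY (γn γe κ : ℝ) : Matrix (Fin 2 × Fin 2) (Fin 2 × Fin 2) ℂ :=
  (-(Complex.I / (2 * ((γn : ℂ) + (γe : ℂ))))) •
      ((γn : ℂ) • (mI ⊗ₖ mJ) + (γe : ℂ) • (mJ ⊗ₖ mI)) -
    (κ / 2 : ℝ) • (mI ⊗ₖ m1 - m1 ⊗ₖ mI)
/-- K̂_YZ = −(i/(2(γₙ+γₑ)))(γₙ·𝐣⊗𝐤 + γₑ·𝐤⊗𝐣) − (κ/2)(−𝐣⊗𝟙 + 𝟙⊗𝐣). -/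
def KhatYZ (γn γe κ : ℝ) : Matrix (Fin 2 × Fin 2) (Fin 2 × Fin 2) ℂ :=
  (-(Complex.I / (2 * ((γn : ℂ) + (γe : ℂ))))) •
      ((γn : ℂ) • (mJ ⊗ₖ mK) + (γe : ℂ) • (mK ⊗ₖ mJ)) -
    (κ / 2 : ℝ) • (-(mJ ⊗ₖ m1) + m1 ⊗ₖ mJ)
/-- K̂_ZX = (i/(2(γₙ+γₑ)))(γₙ·𝐤⊗𝐢 + γₑ·𝐢⊗𝐤) − (κ/2)(𝐤⊗𝟙 − 𝟙⊗𝐤). -/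
def KhatZX (γn γe κ : ℝ) : Matrix (Fin 2 × Fin 2) (Fin 2 × Fin 2) ℂ :=
  ((Complex.I / (2 * ((γn : ℂ) + (γe : ℂ))))) •
      ((γn : ℂ) • (mK ⊗ₖ mI) + (γe : ℂ) • (mI ⊗ₖ mK)) -
    (κ / 2 : ℝ) • (mK ⊗ₖ m1 - m1 ⊗ₖ mK)

/-!
For 2×2 matrices `Xᵀ𝐣 + 𝐣X = (tr X)·𝐣`, so for `Q = 𝐣⊗𝐣` the map `H ↦ HᵀQ + QH` sends `A⊗𝟙`
and `𝟙⊗B` to `(tr A)·Q` and `(tr B)·Q`. Every generator of `𝔡` has this form with a purely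
imaginary trace, and the condition is ℝ-linear in `H`, so all of `𝔡` satisfies it. Conversely,
the entries of `HᵀQ + QH = iφ₀·Q`, together with skew-Hermiticity, determine `H` as an explicit
real combination of the generators.
-/

section KroneckerTranspose

variable {R m n : Type*} [CommRing R] [Fintype m] [Fintype n]

theorem kronecker_one_transpose_mul_add_mul [DecidableEq n] (A M : Matrix m m R)
    (N : Matrix n n R) :
    (A ⊗ₖ (1 : Matrix n n R))ᵀ * (M ⊗ₖ N) + (M ⊗ₖ N) * (A ⊗ₖ 1) = (Aᵀ * M + M * A) ⊗ₖ N := by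
  rw [← kroneckerMap_transpose, ← mul_kronecker_mul, ← mul_kronecker_mul, transpose_one,
    one_mul, mul_one, ← add_kronecker]

theorem one_kronecker_transpose_mul_add_mul [DecidableEq m] (B N : Matrix n n R)
    (M : Matrix m m R) :
    ((1 : Matrix m m R) ⊗ₖ B)ᵀ * (M ⊗ₖ N) + (M ⊗ₖ N) * (1 ⊗ₖ B) = M ⊗ₖ (Bᵀ * N + N * B) := by
  rw [← kroneckerMap_transpose, ← mul_kronecker_mul, ← mul_kronecker_mul, transpose_one,
    one_mul, mul_one, ← kronecker_add]

end KroneckerTranspose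

theorem transpose_mul_J_add_J_mul_eq_trace_smul {R : Type*} [CommRing R]
    (X : Matrix (Fin 2) (Fin 2) R) :
    Xᵀ * !![0, -1; 1, 0] + !![0, -1; 1, 0] * X = X.trace • !![0, -1; 1, 0] := by
  ext i j
  fin_cases i <;> fin_cases j <;>
    simp [mul_apply, vecMul, dotProduct, Fin.sum_univ_two, trace_fin_two] <;> ring

theorem kronecker_m1_transpose_mul_add_mul (X : Matrix (Fin 2) (Fin 2) ℂ) :
    (X ⊗ₖ m1)ᵀ * (mJ ⊗ₖ mJ) + (mJ ⊗ₖ mJ) * (X ⊗ₖ m1) = X.trace • (mJ ⊗ₖ mJ) := by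
  rw [m1, kronecker_one_transpose_mul_add_mul, mJ, transpose_mul_J_add_J_mul_eq_trace_smul,
    smul_kronecker]

theorem m1_kronecker_transpose_mul_add_mul (X : Matrix (Fin 2) (Fin 2) ℂ) :
    (m1 ⊗ₖ X)ᵀ * (mJ ⊗ₖ mJ) + (mJ ⊗ₖ mJ) * (m1 ⊗ₖ X) = X.trace • (mJ ⊗ₖ mJ) := by
  rw [m1, one_kronecker_transpose_mul_add_mul, mJ, transpose_mul_J_add_J_mul_eq_trace_smul,
    kronecker_smul]

theorem exists_phase_of_mem_span {n : Type*} [Fintype n] {Q : Matrix n n ℂ}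
    {s : Set (Matrix n n ℂ)} (hs : ∀ g ∈ s, ∃ φ : ℝ, gᵀ * Q + Q * g = (I * φ) • Q)
    {H : Matrix n n ℂ} (hH : H ∈ Submodule.span ℝ s) :
    ∃ φ : ℝ, Hᵀ * Q + Q * H = (I * φ) • Q := by
  induction hH using Submodule.span_induction with
  | mem g hg => exact hs g hg
  | zero => exact ⟨0, by simp⟩
  | add A B _ _ hA hB =>
    obtain ⟨φ, hφ⟩ := hA
    obtain ⟨ψ, hψ⟩ := hB
    refine ⟨φ + ψ, ?_⟩
    rw [transpose_add, add_mul, mul_add, add_add_add_comm, hφ, hψ, ← add_smul]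
    push_cast
    ring_nf
  | smul r A _ hA =>
    obtain ⟨φ, hφ⟩ := hA
    refine ⟨r * φ, ?_⟩
    rw [← algebraMap_smul ℂ r A, transpose_smul, smul_mul, Matrix.mul_smul, ← smul_add, hφ,
      smul_smul]
    congr 1
    simp only [Complex.coe_algebraMap, Complex.ofReal_mul]
    ring

theorem exists_phase_of_mem_generators :
    ∀ g ∈ ({I • (m1 ⊗ₖ m1), mI ⊗ₖ m1, mJ ⊗ₖ m1, mK ⊗ₖ m1, m1 ⊗ₖ mI, m1 ⊗ₖ mJ, m1 ⊗ₖ mK} :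
      Set (Matrix (Fin 2 × Fin 2) (Fin 2 × Fin 2) ℂ)),
      ∃ φ : ℝ, gᵀ * (mJ ⊗ₖ mJ) + (mJ ⊗ₖ mJ) * g = (I * φ) • (mJ ⊗ₖ mJ) := by
  rintro g (rfl | rfl | rfl | rfl | rfl | rfl | rfl)
  · refine ⟨2, ?_⟩
    rw [← smul_kronecker, kronecker_m1_transpose_mul_add_mul]
    simp [m1]
  all_goals
    refine ⟨0, ?_⟩
    first
    | rw [kronecker_m1_transpose_mul_add_mul]
    | rw [m1_kronecker_transpose_mul_add_mul]
    simp [mI, mJ, mK, trace_fin_two_of]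

-- In `a·i𝟙 + (b𝐢 + c𝐣 + d𝐤)⊗𝟙 + 𝟙⊗(e𝐢 + f𝐣 + g𝐤)` the entries at `((0,0),(0,1))` and
-- `((0,0),(1,0))` are `ei - f` and `bi - c`, and the diagonal is `i(a ± d ± g)` with `2a = φ`.
theorem eq_combination_of_skewHermitian {H : Matrix (Fin 2 × Fin 2) (Fin 2 × Fin 2) ℂ}
    (hH : Hᴴ = -H) {φ : ℝ}
    (hL : Hᵀ * (mJ ⊗ₖ mJ) + (mJ ⊗ₖ mJ) * H = (I * φ) • (mJ ⊗ₖ mJ)) :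
    H = (φ / 2) • (I • (m1 ⊗ₖ m1)) + (H (0, 0) (1, 0)).im • (mI ⊗ₖ m1)
      + (-(H (0, 0) (1, 0)).re) • (mJ ⊗ₖ m1)
      + ((H (0, 0) (0, 0) - H (1, 0) (1, 0)).im / 2) • (mK ⊗ₖ m1)
      + (H (0, 0) (0, 1)).im • (m1 ⊗ₖ mI) + (-(H (0, 0) (0, 1)).re) • (m1 ⊗ₖ mJ)
      + ((H (0, 0) (0, 0) - H (0, 1) (0, 1)).im / 2) • (m1 ⊗ₖ mK) := by
  rw [← Matrix.ext_iff] at hL hH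
  simp [Prod.forall, Fin.forall_fin_two, mul_apply, Fintype.sum_prod_type, mJ,
    Complex.ext_iff] at hL hH
  ext ⟨a, b⟩ ⟨c, d⟩
  fin_cases a <;> fin_cases b <;> fin_cases c <;> fin_cases d <;>
    simp [m1, mI, mJ, mK, Complex.ext_iff] <;> (try constructor) <;> linarith

/-- A skew-Hermitian `H` satisfies `Hᵀ·Q + Q·H = (i·φ₀)·Q` for some real `φ₀`,
where `Q = 𝐣⊗𝐣`, if and only if `H` lies in the real span
𝔡 = span_ℝ{ i·(𝟙⊗𝟙), 𝐢⊗𝟙, 𝐣⊗𝟙, 𝐤⊗𝟙, 𝟙⊗𝐢, 𝟙⊗𝐣, 𝟙⊗𝐤 }. -/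
theorem stmt0 (H : Matrix (Fin 2 × Fin 2) (Fin 2 × Fin 2) ℂ) (hH : Hᴴ = -H) :
    (∃ φ₀ : ℝ, Hᵀ * (mJ ⊗ₖ mJ) + (mJ ⊗ₖ mJ) * H = (Complex.I * (φ₀ : ℂ)) • (mJ ⊗ₖ mJ)) ↔
      H ∈ Submodule.span ℝ
        ({Complex.I • (m1 ⊗ₖ m1), mI ⊗ₖ m1, mJ ⊗ₖ m1, mK ⊗ₖ m1,
          m1 ⊗ₖ mI, m1 ⊗ₖ mJ, m1 ⊗ₖ mK} :
          Set (Matrix (Fin 2 × Fin 2) (Fin 2 × Fin 2) ℂ)) := by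
  set S : Set (Matrix (Fin 2 × Fin 2) (Fin 2 × Fin 2) ℂ) :=
    {I • (m1 ⊗ₖ m1), mI ⊗ₖ m1, mJ ⊗ₖ m1, mK ⊗ₖ m1, m1 ⊗ₖ mI, m1 ⊗ₖ mJ, m1 ⊗ₖ mK}
  refine ⟨fun ⟨φ, hφ⟩ => ?_, exists_phase_of_mem_span exists_phase_of_mem_generators⟩
  have smul_mem (c : ℝ) {g} (hg : g ∈ S) : c • g ∈ Submodule.span ℝ S :=
    Submodule.smul_mem _ c (Submodule.subset_span hg)
  rw [eq_combination_of_skewHermitian hH hφ]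
  apply_rules [Submodule.add_mem, smul_mem, Set.mem_insert, Set.mem_insert_of_mem,
    Set.mem_singleton]
end
end

section
/- The image of the real span 𝔡 = span_ℝ{ i·(𝟙⊗𝟙), 𝐢⊗𝟙, 𝐣⊗𝟙, 𝐤⊗𝟙, 𝟙⊗𝐢, 𝟙⊗𝐣, 𝟙⊗𝐤 } under the matrix exponential equals the set of all Kronecker products of 2×2 unitary matrices: { exp H : H ∈ 𝔡 } = { A ⊗ B : A, B ∈ U(2) }. -/
open Matrix Kronecker Complex

noncomputable section

/-! The span is `𝔲(2) ⊗ 𝟙 + 𝟙 ⊗ 𝔲(2)` with `𝔲(2) = span_ℝ {i𝟙, 𝐢, 𝐣, 𝐤}` (the generator `i𝟙 ⊗ 𝟙`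
lies in both summands), and since `A ⊗ 𝟙` and `𝟙 ⊗ B` commute, `exp (A ⊗ 𝟙 + 𝟙 ⊗ B) = exp A ⊗ exp B`.
So it suffices that `exp` maps `𝔲(2)` onto `U(2)`. Its elements are skew-Hermitian, hence
exponentiate to unitaries. Conversely a unitary is a phase `e^{iδ}` times an element of `SU(2)`,
i.e. a unit quaternion `x + y𝐢 + z𝐣 + w𝐤`; writing it as `cos θ + sin θ u` with `u` a unit
imaginary quaternion, `u² = -1` gives `exp (θ u) = cos θ + sin θ u`. -/

open NormedSpace

section ComplexStructure

variable {A : Type*} [NormedRing A] [NormedAlgebra ℝ A] [Algebra ℚ A]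

theorem exp_smul_of_mul_self_eq_neg_one {u : A} (hu : u * u = -1) (t : ℝ) :
    exp (t • u) = Real.cos t • (1 : A) + Real.sin t • u := by
  let φ := Complex.liftAux u hu
  have h := map_exp φ (φ.toLinearMap.continuous_of_finiteDimensional) (t * Complex.I)
  rw [← Complex.exp_eq_exp_ℂ, Complex.exp_mul_I, ← Complex.ofReal_cos, ← Complex.ofReal_sin] at h
  simpa [φ, Algebra.algebraMap_eq_smul_one, Complex.cos_ofReal_re, Complex.sin_ofReal_re]
    using h.symm

end ComplexStructure

section Kronecker

variable (m n α : Type*) [Fintype m] [DecidableEq m] [Fintype n] [DecidableEq n] [CommSemiring α]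

def kroneckerOneRingHom : Matrix m m α →+* Matrix (m × n) (m × n) α where
  toFun A := A ⊗ₖ 1
  map_one' := one_kronecker_one
  map_mul' A B := by rw [← mul_kronecker_mul, one_mul]
  map_zero' := zero_kronecker _
  map_add' A B := add_kronecker _ _ _

def oneKroneckerRingHom : Matrix n n α →+* Matrix (m × n) (m × n) α where
  toFun B := 1 ⊗ₖ B
  map_one' := one_kronecker_one
  map_mul' A B := by rw [← mul_kronecker_mul, one_mul]
  map_zero' := kronecker_zero _
  map_add' A B := kronecker_add _ _ _

variable {m n} {𝕜 : Type*} [RCLike 𝕜]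

theorem exp_kronecker_one (A : Matrix m m 𝕜) :
    exp (A ⊗ₖ (1 : Matrix n n 𝕜)) = exp A ⊗ₖ 1 := by
  -- `map_exp` needs a Banach-algebra norm on matrices; any choice induces the usual topology
  open scoped Norms.Operator in
  exact (map_exp (𝔹 := Matrix (m × n) (m × n) 𝕜) (kroneckerOneRingHom m n 𝕜)
    (continuous_pi fun _ => continuous_pi fun _ =>
      ((continuous_id.matrix_elem _ _).mul continuous_const)) A).symm

theorem exp_one_kronecker (B : Matrix n n 𝕜) :
    exp ((1 : Matrix m m 𝕜) ⊗ₖ B) = 1 ⊗ₖ exp B := by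
  open scoped Norms.Operator in
  exact (map_exp (𝔹 := Matrix (m × n) (m × n) 𝕜) (oneKroneckerRingHom m n 𝕜)
    (continuous_pi fun _ => continuous_pi fun _ =>
      (continuous_const.mul (continuous_id.matrix_elem _ _))) B).symm

theorem exp_kronecker_one_add_one_kronecker (A : Matrix m m 𝕜) (B : Matrix n n 𝕜) :
    exp (A ⊗ₖ 1 + 1 ⊗ₖ B) = exp A ⊗ₖ exp B := by
  have hAB : Commute (A ⊗ₖ (1 : Matrix n n 𝕜)) ((1 : Matrix m m 𝕜) ⊗ₖ B) := by
    simp only [Commute, SemiconjBy, ← mul_kronecker_mul, one_mul, mul_one]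
  rw [Matrix.exp_add_of_commute _ _ hAB, exp_kronecker_one, exp_one_kronecker,
    ← mul_kronecker_mul, one_mul, mul_one]

end Kronecker

theorem Matrix.exp_smul_one {n : Type*} [Fintype n] [DecidableEq n] (c : ℂ) :
    exp (c • (1 : Matrix n n ℂ)) = Complex.exp c • 1 := by
  open scoped Norms.Operator in
  have h := algebraMap_exp_comm (𝔸 := Matrix n n ℂ) c
  rw [Algebra.algebraMap_eq_smul_one, Algebra.algebraMap_eq_smul_one, ← Complex.exp_eq_exp_ℂ] at h
  exact h.symm

theorem Matrix.exp_mem_unitaryGroup {n 𝕜 : Type*} [Fintype n] [DecidableEq n] [RCLike 𝕜]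
    {A : Matrix n n 𝕜} (hA : A ∈ skewAdjoint (Matrix n n 𝕜)) : exp A ∈ unitaryGroup n 𝕜 := by
  rw [Unitary.mem_iff, star_eq_conjTranspose, ← exp_conjTranspose, ← star_eq_conjTranspose,
    skewAdjoint.mem_iff.1 hA, ← Matrix.exp_add_of_commute _ _ (Commute.refl A).neg_left,
    ← Matrix.exp_add_of_commute _ _ (Commute.refl A).neg_right, neg_add_cancel, add_neg_cancel,
    NormedSpace.exp_zero, and_self]

theorem Complex.exp_ofReal_mul_I_mem_unitary (x : ℝ) :
    Complex.exp (x * Complex.I) ∈ unitary ℂ := by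
  rw [Unitary.mem_iff_star_mul_self, Complex.star_def, Complex.conj_mul',
    Complex.norm_exp_ofReal_mul_I]
  simp

theorem Complex.eq_exp_arg_mul_I_of_norm_eq_one {z : ℂ} (hz : ‖z‖ = 1) :
    z = Complex.exp (z.arg * Complex.I) := by
  simpa [hz] using (Complex.norm_mul_exp_arg_mul_I z).symm

theorem exists_phase_smul_mem_specialUnitaryGroup {n : Type*} [Fintype n] [DecidableEq n]
    [Nonempty n] {A : Matrix n n ℂ} (hA : A ∈ unitaryGroup n ℂ) :
    ∃ δ : ℝ, ∃ S ∈ specialUnitaryGroup n ℂ, A = Complex.exp (δ * Complex.I) • S := by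
  have hdet : A.det = Complex.exp ((A.det).arg * Complex.I) :=
    Complex.eq_exp_arg_mul_I_of_norm_eq_one
      (CStarRing.norm_of_mem_unitary (det_of_mem_unitary hA))
  set δ : ℝ := (A.det).arg / Fintype.card n with hδ
  refine ⟨δ, Complex.exp (-δ * Complex.I) • A, mem_specialUnitaryGroup_iff.2 ⟨?_, ?_⟩, ?_⟩
  · exact Unitary.smul_mem_of_mem
      (by exact_mod_cast Complex.exp_ofReal_mul_I_mem_unitary (-δ)) hA
  · have hcard : (Fintype.card n : ℂ) ≠ 0 := Nat.cast_ne_zero.2 Fintype.card_ne_zero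
    rw [det_smul, ← Complex.exp_nat_mul, hdet, ← Complex.exp_add, hδ, ← Complex.exp_zero]
    congr 1
    push_cast
    field_simp
    ring
  · rw [smul_smul, ← Complex.exp_add]
    simp

def u2 : Submodule ℝ (Matrix (Fin 2) (Fin 2) ℂ) := Submodule.span ℝ {Complex.I • m1, mI, mJ, mK}

def imQuat (y z w : ℝ) : Matrix (Fin 2) (Fin 2) ℂ := y • mI + z • mJ + w • mK

theorem imQuat_mem_u2 (y z w : ℝ) : imQuat y z w ∈ u2 := by
  refine add_mem (add_mem ?_ ?_) ?_ <;>
    exact Submodule.smul_mem _ _ (Submodule.subset_span (by simp))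

theorem u2_le_skewAdjoint : u2 ≤ skewAdjoint.submodule ℝ (Matrix (Fin 2) (Fin 2) ℂ) := by
  refine Submodule.span_le.2 ?_
  rintro _ (rfl | rfl | rfl | rfl) <;>
    · ext i j
      fin_cases i <;> fin_cases j <;> simp [m1, mI, mJ, mK]

theorem exp_mem_unitaryGroup_of_mem_u2 {P : Matrix (Fin 2) (Fin 2) ℂ} (hP : P ∈ u2) :
    exp P ∈ unitaryGroup (Fin 2) ℂ :=
  Matrix.exp_mem_unitaryGroup (u2_le_skewAdjoint hP)

theorem mI_mul_self : mI * mI = -1 := by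
  ext i j
  fin_cases i <;> fin_cases j <;> simp [mI, mul_apply, Fin.sum_univ_two]

theorem imQuat_mul_self (y z w : ℝ) :
    imQuat y z w * imQuat y z w =
      (-(y ^ 2 + z ^ 2 + w ^ 2) : ℝ) • (1 : Matrix (Fin 2) (Fin 2) ℂ) := by
  ext i j
  fin_cases i <;> fin_cases j <;>
    simp [imQuat, mI, mJ, mK, mul_apply, Fin.sum_univ_two, Complex.ext_iff, -Complex.ofReal_pow] <;>
    constructor <;> ring

theorem exists_eq_quat_of_mem_specialUnitaryGroup {S : Matrix (Fin 2) (Fin 2) ℂ}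
    (hS : S ∈ specialUnitaryGroup (Fin 2) ℂ) :
    ∃ x y z w : ℝ, x ^ 2 + y ^ 2 + z ^ 2 + w ^ 2 = 1 ∧ S = x • m1 + imQuat y z w := by
  obtain ⟨hU, hdet⟩ := mem_specialUnitaryGroup_iff.1 hS
  -- for determinant one, the inverse `Sᴴ` is the adjugate
  have hadj : Sᴴ = adjugate S := by
    rw [← star_eq_conjTranspose, ← inv_eq_left_inv (Unitary.star_mul_self_of_mem hU),
      Matrix.inv_def, hdet]
    simp
  have h11 : S 1 1 = star (S 0 0) := by
    simpa [adjugate_fin_two] using (congr_fun₂ hadj 0 0).symm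
  have h10 : S 1 0 = -star (S 0 1) := by
    rw [eq_neg_iff_add_eq_zero, add_comm, ← eq_neg_iff_add_eq_zero]
    simpa [adjugate_fin_two] using congr_fun₂ hadj 1 0
  refine ⟨(S 0 0).re, (S 0 1).im, -(S 0 1).re, (S 0 0).im, ?_, ?_⟩
  · have h := congrArg Complex.re hdet
    rw [det_fin_two, h11, h10] at h
    simp only [RCLike.star_def, mul_neg, sub_neg_eq_add, add_re, mul_re, conj_re, conj_im,
      one_re] at h
    linarith
  · ext i j
    fin_cases i <;> fin_cases j <;> simp [h11, h10, m1, imQuat, mI, mJ, mK, Complex.ext_iff]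

theorem exists_mem_u2_exp_eq_quat {x y z w : ℝ} (h : x ^ 2 + y ^ 2 + z ^ 2 + w ^ 2 = 1) :
    ∃ P ∈ u2, exp P = x • m1 + imQuat y z w := by
  set s := √(y ^ 2 + z ^ 2 + w ^ 2)
  obtain ⟨u, hu, huu, hsu⟩ : ∃ u ∈ u2, u * u = -1 ∧ s • u = imQuat y z w := by
    rcases eq_or_ne s 0 with hs | hs
    · have hyzw : y ^ 2 + z ^ 2 + w ^ 2 = 0 := (Real.sqrt_eq_zero (by positivity)).1 hs
      obtain ⟨rfl, rfl, rfl⟩ : y = 0 ∧ z = 0 ∧ w = 0 := by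
        refine ⟨?_, ?_, ?_⟩ <;> nlinarith [sq_nonneg y, sq_nonneg z, sq_nonneg w]
      -- then the quaternion is `±1`, and any unit imaginary quaternion will do
      exact ⟨mI, Submodule.subset_span (by simp), mI_mul_self, by simp [hs, imQuat]⟩
    · refine ⟨s⁻¹ • imQuat y z w, Submodule.smul_mem _ _ (imQuat_mem_u2 y z w), ?_,
        smul_inv_smul₀ hs _⟩
      have hs2 : s ^ 2 = y ^ 2 + z ^ 2 + w ^ 2 := Real.sq_sqrt (by positivity)
      rw [smul_mul_smul_comm, imQuat_mul_self, smul_smul, ← hs2,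
        show s⁻¹ * s⁻¹ * -s ^ 2 = -1 by field_simp, neg_smul, one_smul]
  have hx : -1 ≤ x ∧ x ≤ 1 := by
    rw [← abs_le, ← sq_le_one_iff_abs_le_one]
    nlinarith [sq_nonneg y, sq_nonneg z, sq_nonneg w]
  have hsin : Real.sin (Real.arccos x) = s := by
    rw [Real.sin_arccos]
    congr 1
    linarith
  refine ⟨Real.arccos x • u, Submodule.smul_mem _ _ hu, ?_⟩
  open scoped Norms.Operator in
  refine (exp_smul_of_mul_self_eq_neg_one huu _).trans ?_
  rw [Real.cos_arccos hx.1 hx.2, hsin, hsu]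
  rfl

theorem exists_mem_u2_exp_eq_of_mem_unitaryGroup {A : Matrix (Fin 2) (Fin 2) ℂ}
    (hA : A ∈ unitaryGroup (Fin 2) ℂ) : ∃ P ∈ u2, exp P = A := by
  obtain ⟨δ, S, hS, rfl⟩ := exists_phase_smul_mem_specialUnitaryGroup hA
  obtain ⟨x, y, z, w, hxyzw, rfl⟩ := exists_eq_quat_of_mem_specialUnitaryGroup hS
  obtain ⟨Q, hQ, hQS⟩ := exists_mem_u2_exp_eq_quat hxyzw
  have hphase :
      δ • (Complex.I • m1) = ((δ : ℂ) * Complex.I) • (1 : Matrix (Fin 2) (Fin 2) ℂ) := by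
    rw [← smul_assoc, Complex.real_smul]
    rfl
  refine ⟨δ • (Complex.I • m1) + Q,
    add_mem (Submodule.smul_mem _ _ (Submodule.subset_span (by simp))) hQ, ?_⟩
  rw [hphase, Matrix.exp_add_of_commute _ _ ((Commute.one_left Q).smul_left _),
    Matrix.exp_smul_one, hQS, smul_one_mul]

theorem span_eq_map_u2_sup_map_u2 :
    Submodule.span ℝ
        ({Complex.I • (m1 ⊗ₖ m1), mI ⊗ₖ m1, mJ ⊗ₖ m1, mK ⊗ₖ m1,
          m1 ⊗ₖ mI, m1 ⊗ₖ mJ, m1 ⊗ₖ mK} : Set (Matrix (Fin 2 × Fin 2) (Fin 2 × Fin 2) ℂ)) =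
      u2.map ((kroneckerBilinear (R := ℝ)).flip m1) ⊔ u2.map (kroneckerBilinear (R := ℝ) m1) := by
  rw [u2, Submodule.map_span, Submodule.map_span, ← Submodule.span_union]
  have hkron (A B : Matrix (Fin 2) (Fin 2) ℂ) : kroneckerBilinear (R := ℝ) A B = A ⊗ₖ B := rfl
  congr 1
  ext H
  simp only [Set.image_insert_eq, Set.image_singleton, LinearMap.flip_apply, hkron,
    smul_kronecker, kronecker_smul, Set.mem_union, Set.mem_insert_iff, Set.mem_singleton_iff]
  tauto

/-- the image of 𝔡 under the matrix exponential equals the set of Kronecker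
products of 2×2 unitary matrices. -/
theorem stmt2 :
    {M | ∃ H ∈ Submodule.span ℝ
        ({Complex.I • (m1 ⊗ₖ m1), mI ⊗ₖ m1, mJ ⊗ₖ m1, mK ⊗ₖ m1,
          m1 ⊗ₖ mI, m1 ⊗ₖ mJ, m1 ⊗ₖ mK} :
          Set (Matrix (Fin 2 × Fin 2) (Fin 2 × Fin 2) ℂ)),
      M = NormedSpace.exp H} =
    {M | ∃ A B : Matrix (Fin 2) (Fin 2) ℂ,
      A ∈ Matrix.unitaryGroup (Fin 2) ℂ ∧ B ∈ Matrix.unitaryGroup (Fin 2) ℂ ∧ M = A ⊗ₖ B} := by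
  ext M
  simp only [span_eq_map_u2_sup_map_u2, Set.mem_ofPred_eq]
  constructor
  · rintro ⟨_, hH, rfl⟩
    obtain ⟨_, ⟨P, hP, rfl⟩, _, ⟨Q, hQ, rfl⟩, rfl⟩ := Submodule.mem_sup.1 hH
    exact ⟨exp P, exp Q, exp_mem_unitaryGroup_of_mem_u2 hP, exp_mem_unitaryGroup_of_mem_u2 hQ,
      exp_kronecker_one_add_one_kronecker P Q⟩
  · rintro ⟨A, B, hA, hB, rfl⟩
    obtain ⟨P, hP, rfl⟩ := exists_mem_u2_exp_eq_of_mem_unitaryGroup hA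
    obtain ⟨Q, hQ, rfl⟩ := exists_mem_u2_exp_eq_of_mem_unitaryGroup hB
    exact ⟨_, Submodule.mem_sup.2 ⟨_, ⟨P, hP, rfl⟩, _, ⟨Q, hQ, rfl⟩, rfl⟩,
      (exp_kronecker_one_add_one_kronecker P Q).symm⟩
end
end

section
/- Let X and Y be n×n complex matrices. Then the real span of { exp(s·X) · Y · exp(−s·X) : s ∈ ℝ } equals the real span of { (ad X)^k Y : k ∈ ℕ }, where ad X is the operator Z ↦ XZ − ZX. In particular the commutator ⁅X,Y⁆ = XY − YX lies in the real span of { exp(s·X) · Y · exp(−s·X) : s ∈ ℝ }. -/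
/-!
Both `s ↦ exp (s • ad X) Y` and `s ↦ exp (s • X) * Y * exp (-s • X)` solve `u' = (ad X) u` with
`u 0 = Y`, so they coincide; expanding the first as a power series puts every conjugate in any
closed `ad X`-invariant subspace containing `Y`, e.g. the span of the `(ad X)^k Y`. Conversely,
differentiating the conjugation curve brings down one commutator, and a closed subspace containing
a curve contains its derivatives, so induction puts every `(ad X)^k Y` in the span of the
conjugates. In finite dimension both spans are closed.
-/

open NormedSpace

theorem Submodule.mem_of_hasDerivAt {𝕜 E : Type*} [NontriviallyNormedField 𝕜]
    [NormedAddCommGroup E] [NormedSpace 𝕜 E] {p : Submodule 𝕜 E} (hp : IsClosed (p : Set E))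
    {f : 𝕜 → E} {f' : E} {s : 𝕜} (hf : HasDerivAt f f' s) (h : ∀ t, f t ∈ p) : f' ∈ p :=
  hp.mem_of_tendsto (hasDerivAt_iff_tendsto_slope.mp hf)
    (.of_forall fun t => p.smul_mem _ (p.sub_mem (h t) (h s)))

theorem Submodule.exp_apply_mem {𝕂 E : Type*} [RCLike 𝕂] [NormedAddCommGroup E]
    [NormedSpace 𝕂 E] [CompleteSpace E] {p : Submodule 𝕂 E} (hp : IsClosed (p : Set E))
    {T : E →L[𝕂] E} (hT : ∀ x ∈ p, T x ∈ p) {x : E} (hx : x ∈ p) : exp T x ∈ p := by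
  have hsum : HasSum (fun k : ℕ => ((k.factorial : 𝕂)⁻¹ • T ^ k) x) (exp T x) :=
    (exp_series_hasSum_exp' (𝕂 := 𝕂) T).mapL (ContinuousLinearMap.apply 𝕂 E x)
  refine hp.mem_of_tendsto hsum.tendsto_sum_nat (.of_forall fun N => p.sum_mem fun k _ => ?_)
  have hTk : (T ^ k) x ∈ p := by
    rw [← ContinuousLinearMap.coe_coe, ContinuousLinearMap.toLinearMap_pow]
    exact Module.End.pow_apply_mem_of_forall_mem k hT x hx
  exact p.smul_mem _ hTk

section

variable {𝔸 : Type*} [NormedRing 𝔸] [NormedAlgebra ℝ 𝔸]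

noncomputable def adCLM (X : 𝔸) : 𝔸 →L[ℝ] 𝔸 :=
  ContinuousLinearMap.mul ℝ 𝔸 X - (ContinuousLinearMap.mul ℝ 𝔸).flip X

@[simp]
theorem adCLM_apply (X Z : 𝔸) : adCLM X Z = X * Z - Z * X := rfl

theorem exp_conj_commutator (X Y : 𝔸) (s : ℝ) :
    exp (s • X) * (X * Y - Y * X) * exp ((-s) • X) =
      adCLM X (exp (s • X) * Y * exp ((-s) • X)) := by
  have hX : ∀ r : ℝ, X * exp (r • X) = exp (r • X) * X := fun r =>
    ((Commute.refl X).smul_right r).exp_right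
  rw [adCLM_apply, ← mul_assoc X, ← mul_assoc X, hX s, mul_assoc _ _ X, ← hX (-s)]
  noncomm_ring

variable [CompleteSpace 𝔸]

theorem hasDerivAt_exp_conj (X Y : 𝔸) (s : ℝ) :
    HasDerivAt (fun t : ℝ => exp (t • X) * Y * exp ((-t) • X))
      (exp (s • X) * (X * Y - Y * X) * exp ((-s) • X)) s := by
  have hneg : HasDerivAt (fun t : ℝ => exp ((-t) • X)) (-X * exp ((-s) • X)) s := by
    simpa only [neg_smul, smul_neg] using hasDerivAt_exp_smul_const' (-X) s
  refine (((hasDerivAt_exp_smul_const X s).mul_const Y).mul hneg).congr_deriv ?_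
  noncomm_ring

theorem exp_smul_adCLM_apply (X Y : 𝔸) (s : ℝ) :
    exp (s • adCLM X) Y = exp (s • X) * Y * exp ((-s) • X) := by
  refine congrFun (ODE_solution_unique_univ (v := fun _ => adCLM X) (s := fun _ => Set.univ)
    (t₀ := 0) (f := fun t => exp (t • adCLM X) Y) (g := fun t => exp (t • X) * Y * exp ((-t) • X))
    (fun _ => (adCLM X).lipschitz.lipschitzOnWith) (fun t => ⟨?_, trivial⟩)
    (fun t => ⟨(hasDerivAt_exp_conj X Y t).congr_deriv (exp_conj_commutator X Y t), trivial⟩)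
    ?_) s
  · exact (hasDerivAt_exp_smul_const' (adCLM X) t).clm_apply (hasDerivAt_const t Y)
      |>.congr_deriv (by rw [map_zero, add_zero]; rfl)
  · simp [zero_smul ℝ (adCLM X)]

theorem exp_conj_mem_of_forall_commutator_mem {p : Submodule ℝ 𝔸} (hp : IsClosed (p : Set 𝔸))
    {X Y : 𝔸} (hY : Y ∈ p) (hX : ∀ Z ∈ p, X * Z - Z * X ∈ p) (s : ℝ) :
    exp (s • X) * Y * exp ((-s) • X) ∈ p := by
  rw [← exp_smul_adCLM_apply]
  exact p.exp_apply_mem hp (fun Z hZ => p.smul_mem s (hX Z hZ)) hY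

theorem iterate_commutator_mem_of_forall_exp_conj_mem {p : Submodule ℝ 𝔸}
    (hp : IsClosed (p : Set 𝔸)) {X Y : 𝔸} (h : ∀ s : ℝ, exp (s • X) * Y * exp ((-s) • X) ∈ p)
    (k : ℕ) : (fun Z => X * Z - Z * X)^[k] Y ∈ p := by
  induction k generalizing Y with
  | zero => simpa using h 0
  | succ k ih => exact ih fun s => p.mem_of_hasDerivAt hp (hasDerivAt_exp_conj X Y s) h

end

/-- the real span of { exp(s·X)·Y·exp(−s·X) : s ∈ ℝ } equals the real span of
{ (ad X)^k Y : k ∈ ℕ }; in particular ⁅X,Y⁆ lies in the former span. -/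
theorem stmt4 (n : ℕ) (X Y : Matrix (Fin n) (Fin n) ℂ) :
    Submodule.span ℝ
        {M : Matrix (Fin n) (Fin n) ℂ | ∃ s : ℝ,
          M = NormedSpace.exp (s • X) * Y * NormedSpace.exp ((-s) • X)} =
      Submodule.span ℝ
        {M : Matrix (Fin n) (Fin n) ℂ | ∃ k : ℕ,
          M = (fun Z => X * Z - Z * X)^[k] Y} ∧
    X * Y - Y * X ∈ Submodule.span ℝ
        {M : Matrix (Fin n) (Fin n) ℂ | ∃ s : ℝ,
          M = NormedSpace.exp (s • X) * Y * NormedSpace.exp ((-s) • X)} := by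
  -- `exp` and the spans only see the topology, so any algebra norm will do
  let : NormedRing (Matrix (Fin n) (Fin n) ℂ) := Matrix.linftyOpNormedRing
  let : NormedAlgebra ℝ (Matrix (Fin n) (Fin n) ℂ) := Matrix.linftyOpNormedAlgebra
  set conjugates := Submodule.span ℝ {M : Matrix (Fin n) (Fin n) ℂ | ∃ s : ℝ,
    M = exp (s • X) * Y * exp ((-s) • X)}
  set commutators := Submodule.span ℝ {M : Matrix (Fin n) (Fin n) ℂ | ∃ k : ℕ,
    M = (fun Z => X * Z - Z * X)^[k] Y}
  have hle : commutators ≤ conjugates := Submodule.span_le.2 <| by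
    rintro _ ⟨k, rfl⟩
    exact iterate_commutator_mem_of_forall_exp_conj_mem conjugates.closed_of_finiteDimensional
      (fun s => Submodule.subset_span ⟨s, rfl⟩) k
  have hinv : commutators ≤ commutators.comap (adCLM X).toLinearMap := Submodule.span_le.2 <| by
    rintro _ ⟨k, rfl⟩
    exact Submodule.subset_span ⟨k + 1, (Function.iterate_succ_apply' _ k Y).symm⟩
  refine ⟨le_antisymm (Submodule.span_le.2 ?_) hle, hle (Submodule.subset_span ⟨1, rfl⟩)⟩
  rintro _ ⟨s, rfl⟩
  exact exp_conj_mem_of_forall_commutator_mem commutators.closed_of_finiteDimensional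
    (Submodule.subset_span ⟨0, rfl⟩) (fun Z hZ => hinv hZ) s
end

section
/- Let X and Y be n×n complex matrices. Then there exist a natural number m, real numbers s₁, …, s_m ∈ [−1, 1] and real coefficients α₁, …, α_m such that XY − YX = Σ_{k=1}^{m} α_k · exp(s_k·X) · Y · exp(−s_k·X). -/
open Matrix

noncomputable section

/-!
The curve `t ↦ exp (t • X) * Y * exp (-t • X)` has derivative `X * Y - Y * X` at `0`, and a
derivative is a limit of difference quotients of values of the curve, so the commutator lies in
the closure of the span of the values taken on any neighbourhood of `0`. For matrices that span
is finite-dimensional, hence closed.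
-/

open NormedSpace Filter Topology

section ExpConjugation

variable {𝕂 𝔸 : Type*} [RCLike 𝕂] [NormedRing 𝔸] [NormedAlgebra 𝕂 𝔸] [CompleteSpace 𝔸]

theorem hasDerivAt_exp_smul_mul_mul_exp_neg_smul (X Y : 𝔸) :
    HasDerivAt (fun t : 𝕂 => exp (t • X) * Y * exp ((-t) • X)) (X * Y - Y * X) 0 := by
  have hright : HasDerivAt (fun t : 𝕂 => exp ((-t) • X)) (-X) 0 := by
    simpa only [neg_smul, smul_neg, zero_smul, neg_zero, exp_zero, one_mul] using
      hasDerivAt_exp_smul_const (-X) (0 : 𝕂)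
  have hleft : HasDerivAt (fun t : 𝕂 => exp (t • X)) X 0 := by
    simpa only [zero_smul, exp_zero, one_mul] using hasDerivAt_exp_smul_const X (0 : 𝕂)
  refine ((hleft.mul_const Y).mul hright).congr_deriv ?_
  simp only [neg_zero, zero_smul, exp_zero, one_mul, mul_one]
  noncomm_ring

theorem commutator_mem_closure_span_exp_conj (X Y : 𝔸) {s : Set 𝕂} (hs : s ∈ 𝓝 0) :
    X * Y - Y * X ∈ closure
      (Submodule.span 𝕂 ((fun t : 𝕂 => exp (t • X) * Y * exp ((-t) • X)) '' s) : Set 𝔸) := by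
  have hderiv : derivWithin (fun t : 𝕂 => exp (t • X) * Y * exp ((-t) • X)) s 0 = X * Y - Y * X :=
    (derivWithin_of_mem_nhds hs).trans (hasDerivAt_exp_smul_mul_mul_exp_neg_smul X Y).deriv
  rw [← hderiv]
  exact range_derivWithin_subset_closure_span_image _ (by rw [Set.inter_self]; exact subset_closure)
    ⟨0, rfl⟩

end ExpConjugation

theorem Submodule.exists_fin_sum_smul_of_mem_span_image {R M ι : Type*} [Semiring R]
    [AddCommMonoid M] [Module R M] {v : ι → M} {s : Set ι} {x : M}
    (hx : x ∈ Submodule.span R (v '' s)) :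
    ∃ (m : ℕ) (t : Fin m → ι) (c : Fin m → R), (∀ k, t k ∈ s) ∧ x = ∑ k, c k • v (t k) := by
  obtain ⟨m, c, w, rfl⟩ := Submodule.mem_span_set'.mp hx
  choose t hts htw using fun k => (w k).2
  exact ⟨m, t, c, hts, Finset.sum_congr rfl fun k _ => by rw [htw k]⟩

attribute [local instance] Matrix.linftyOpNormedAddCommGroup Matrix.linftyOpNormedRing
  Matrix.linftyOpNormedAlgebra

/-- the commutator XY − YX is a finite real linear combination of conjugates
exp(s_k·X)·Y·exp(−s_k·X) with s_k ∈ [−1, 1]. -/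
theorem stmt5 (n : ℕ) (X Y : Matrix (Fin n) (Fin n) ℂ) :
    ∃ (m : ℕ) (s α : Fin m → ℝ),
      (∀ k, s k ∈ Set.Icc (-1 : ℝ) 1) ∧
      X * Y - Y * X =
        ∑ k, α k • (NormedSpace.exp (s k • X) * Y * NormedSpace.exp ((-(s k)) • X)) := by
  have hmem := commutator_mem_closure_span_exp_conj X Y
    (Icc_mem_nhds (by norm_num : (-1 : ℝ) < 0) zero_lt_one)
  rw [(Submodule.closed_of_finiteDimensional _).closure_eq] at hmem
  exact Submodule.exists_fin_sum_smul_of_mem_span_image hmem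

end
end
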